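/- If P_{S|X}(1|x) = (1 + exp(θ₀ + ⟨θ, x⟩))⁻¹ for all x ∈ 𝒳 and P_{S|Y}(1|y) = (1 + exp(γ₀ + γ₁y))⁻¹ for y ∈ {0,1}, then for every f ∈ 𝓛(P_{X|S=0}), Δ_λ(f) = λ₂·Σᵢ₌₁ᵈ θᵢ·E[f(X)Xᵢ | S=0] + λ₄·γ₁·E[g(Y)·Y | S=0], where g(y) = E[f(X) | Y=y, S=0]. -/

import Mathlib

/-!
Along a line `P + ε h` the derivative of `Q ↦ D(Q‖R)` at `ε = 0` is `∑ h · (log(P/R) + 1)`, and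
the `+ 1` drops out because the direction `h = P₀ f` (and its image under the channel) sums to
zero. So the terms with `R = P_{·|S=0}` vanish, while for `R = P_{·|S=1}` Bayes' rule turns the
logistic form of the posterior into `log (P₀/P₁) = θ₀ + ⟨θ, x⟩ + log (P_S(1)/P_S(0))` (and likewise
`γ₀ + γ₁ y + …` on `𝒴`), whose constant part is again killed by `∑ h = 0`.
-/

open Filter Topology

/-- Kullback–Leibler divergence between distributions on a finite set. -/
noncomputable def KLdiv {α : Type*} [Fintype α] (P Q : α → ℝ) : ℝ :=
  ∑ a, P a * Real.log (P a / Q a)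

/-- The objective `L_λ` evaluated at the perturbed distribution
`P̃_{X|S=0}(x) = P0(x)(1+εf(x))`, with `P̃_{Y|S=0} = W ∘ P̃_{X|S=0}`.
At `ε = 0` this is `L_λ(P_{X|S=0})`. -/
noncomputable def Lobj {𝒳 : Type*} [Fintype 𝒳]
    (P0 P1 : 𝒳 → ℝ) (W : 𝒳 → Bool → ℝ) (Q0 Q1 : Bool → ℝ)
    (l1 l2 l3 l4 : ℝ) (f : 𝒳 → ℝ) (ε : ℝ) : ℝ :=
  l1 * KLdiv (fun x => P0 x * (1 + ε * f x)) P0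
    + l2 * KLdiv (fun x => P0 x * (1 + ε * f x)) P1
    + l3 * KLdiv (fun y => ∑ x, P0 x * (1 + ε * f x) * W x y) Q0
    + l4 * KLdiv (fun y => ∑ x, P0 x * (1 + ε * f x) * W x y) Q1

lemma hasDerivAt_mul_log_div_at_zero (c b q : ℝ) (hc : 0 < c) (hq : 0 < q) :
    HasDerivAt (fun t : ℝ => (c + t * b) * Real.log ((c + t * b) / q))
      (b * (Real.log (c / q) + 1)) 0 := by
  have hlin : HasDerivAt (fun t : ℝ => c + t * b) b 0 := by
    simpa using ((hasDerivAt_id (0 : ℝ)).mul_const b).const_add c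
  have hc' : (c + 0 * b) / q ≠ 0 := by simpa using (div_pos hc hq).ne'
  refine (hlin.mul ((hlin.div_const q).log hc')).congr_deriv ?_
  simp only [zero_mul, add_zero]
  field_simp

lemma sum_mul_add_const_of_sum_eq_zero {α : Type*} [Fintype α] {h : α → ℝ}
    (hh : ∑ a, h a = 0) (t : α → ℝ) (c : ℝ) :
    ∑ a, h a * (t a + c) = ∑ a, h a * t a := by
  simp only [mul_add, Finset.sum_add_distrib, ← Finset.sum_mul, hh, zero_mul, add_zero]

lemma hasDerivAt_KLdiv_add_mul {α : Type*} [Fintype α] {P Q h : α → ℝ}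
    (hP : ∀ a, 0 < P a) (hQ : ∀ a, 0 < Q a) (hh : ∑ a, h a = 0) :
    HasDerivAt (fun t : ℝ => KLdiv (fun a => P a + t * h a) Q)
      (∑ a, h a * Real.log (P a / Q a)) 0 := by
  rw [← sum_mul_add_const_of_sum_eq_zero hh _ 1]
  exact HasDerivAt.fun_sum fun a _ => hasDerivAt_mul_log_div_at_zero _ _ _ (hP a) (hQ a)

lemma sum_channel_eq_zero {α β : Type*} [Fintype α] [Fintype β] {h : α → ℝ} {W : α → β → ℝ}
    (hW : ∀ x, ∑ y, W x y = 1) (hh : ∑ x, h x = 0) :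
    ∑ y, ∑ x, h x * W x y = 0 := by
  rw [Finset.sum_comm]
  simp only [← Finset.mul_sum, hW, mul_one, hh]

lemma channel_add_mul {α β : Type*} [Fintype α] (P h : α → ℝ) (W : α → β → ℝ) (ε : ℝ) (y : β) :
    ∑ x, (P x + ε * h x) * W x y = ∑ x, P x * W x y + ε * ∑ x, h x * W x y := by
  simp only [add_mul, Finset.sum_add_distrib, Finset.mul_sum, mul_assoc]

lemma hasDerivAt_Lobj {𝒳 : Type*} [Fintype 𝒳] {P0 P1 : 𝒳 → ℝ} {W : 𝒳 → Bool → ℝ}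
    {Q0 Q1 : Bool → ℝ} (l1 l2 l3 l4 : ℝ) {f : 𝒳 → ℝ}
    (hP0 : ∀ x, 0 < P0 x) (hP1 : ∀ x, 0 < P1 x) (hW : ∀ x, ∑ y, W x y = 1)
    (hQ0 : ∀ y, Q0 y = ∑ x, P0 x * W x y) (hQ0pos : ∀ y, 0 < Q0 y) (hQ1pos : ∀ y, 0 < Q1 y)
    (hf : ∑ x, P0 x * f x = 0) :
    HasDerivAt (Lobj P0 P1 W Q0 Q1 l1 l2 l3 l4 f)
      (l2 * ∑ x, P0 x * f x * Real.log (P0 x / P1 x)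
        + l4 * ∑ y, (∑ x, P0 x * f x * W x y) * Real.log (Q0 y / Q1 y)) 0 := by
  set h : 𝒳 → ℝ := fun x => P0 x * f x
  set a : Bool → ℝ := fun y => ∑ x, h x * W x y
  have hL : Lobj P0 P1 W Q0 Q1 l1 l2 l3 l4 f = fun ε =>
      l1 * KLdiv (fun x => P0 x + ε * h x) P0 + l2 * KLdiv (fun x => P0 x + ε * h x) P1
        + l3 * KLdiv (fun y => Q0 y + ε * a y) Q0 + l4 * KLdiv (fun y => Q0 y + ε * a y) Q1 := by
    funext ε
    have hline (x : 𝒳) : P0 x * (1 + ε * f x) = P0 x + ε * h x := by ring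
    simp only [Lobj, hline, channel_add_mul, ← hQ0, a]
  have ha : ∑ y, a y = 0 := sum_channel_eq_zero hW hf
  rw [hL]
  refine ((((hasDerivAt_KLdiv_add_mul hP0 hP0 hf).const_mul l1).fun_add
    ((hasDerivAt_KLdiv_add_mul hP0 hP1 hf).const_mul l2)).fun_add
    ((hasDerivAt_KLdiv_add_mul hQ0pos hQ0pos ha).const_mul l3)).fun_add
    ((hasDerivAt_KLdiv_add_mul hQ0pos hQ1pos ha).const_mul l4) |>.congr_deriv ?_
  simp only [div_self (hP0 _).ne', div_self (hQ0pos _).ne', Real.log_one, mul_zero,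
    Finset.sum_const_zero, zero_add, add_zero, a, h]

lemma log_div_eq_of_posterior_eq_logistic {π₀ π₁ a b t : ℝ} (hπ₀ : 0 < π₀) (hπ₁ : 0 < π₁)
    (ha : 0 < a) (hb : 0 < b) (h : π₁ * b / (π₀ * a + π₁ * b) = (1 + Real.exp t)⁻¹) :
    Real.log (a / b) = t + (Real.log π₁ - Real.log π₀) := by
  have hexp : Real.exp t = π₀ * a / (π₁ * b) := by
    have : 0 < 1 + Real.exp t := by positivity
    field_simp at h ⊢
    linarith
  have hlog := congrArg Real.log hexp
  rw [Real.log_exp, Real.log_div (by positivity) (by positivity),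
    Real.log_mul hπ₀.ne' ha.ne', Real.log_mul hπ₁.ne' hb.ne'] at hlog
  rw [Real.log_div ha.ne' hb.ne']
  linarith

lemma sum_mul_log_div_eq_of_posterior_eq_logistic {α : Type*} [Fintype α] {π₀ π₁ c : ℝ}
    {P R h s : α → ℝ} (hπ₀ : 0 < π₀) (hπ₁ : 0 < π₁) (hP : ∀ a, 0 < P a) (hR : ∀ a, 0 < R a)
    (hpost : ∀ a, π₁ * R a / (π₀ * P a + π₁ * R a) = (1 + Real.exp (c + s a))⁻¹)
    (hh : ∑ a, h a = 0) :
    ∑ a, h a * Real.log (P a / R a) = ∑ a, h a * s a := by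
  have hlog (a : α) : Real.log (P a / R a) = s a + (c + (Real.log π₁ - Real.log π₀)) := by
    rw [log_div_eq_of_posterior_eq_logistic hπ₀ hπ₁ (hP a) (hR a) (hpost a)]
    ring
  simp only [hlog]
  exact sum_mul_add_const_of_sum_eq_zero hh _ _

theorem stmt8_general
    {d : ℕ} {𝒳 : Type*} [Fintype 𝒳]
    (v : 𝒳 → Fin d → ℝ)
    (PS : Bool → ℝ) (hPSpos : ∀ s, 0 < PS s)
    (P0 P1 : 𝒳 → ℝ)
    (hP0pos : ∀ x, 0 < P0 x)
    (hP1pos : ∀ x, 0 < P1 x)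
    (W : 𝒳 → Bool → ℝ)
    (hWsum : ∀ x, W x false + W x true = 1)
    (Q0 Q1 : Bool → ℝ)
    (hQ0 : ∀ y, Q0 y = ∑ x, P0 x * W x y)
    (hQ0pos : ∀ y, 0 < Q0 y) (hQ1pos : ∀ y, 0 < Q1 y)
    (l1 l2 l3 l4 : ℝ)
    (PSgX1 : 𝒳 → ℝ)
    (hPSgX1 : ∀ x, PSgX1 x = PS true * P1 x / (PS false * P0 x + PS true * P1 x))
    (PSgY1 : Bool → ℝ)
    (hPSgY1 : ∀ y, PSgY1 y = PS true * Q1 y / (PS false * Q0 y + PS true * Q1 y))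
    (θ0 : ℝ) (θ : Fin d → ℝ)
    (hlogX : ∀ x, PSgX1 x = (1 + Real.exp (θ0 + ∑ i, θ i * v x i))⁻¹)
    (γ0 γ1 : ℝ)
    (hlogY : ∀ y : Bool, PSgY1 y
      = (1 + Real.exp (γ0 + γ1 * (if y then (1 : ℝ) else 0)))⁻¹)
    (f : 𝒳 → ℝ)
    (hfmean : ∑ x, P0 x * f x = 0)
    (g : Bool → ℝ)
    (hg : ∀ y, g y = (∑ x, P0 x * W x y * f x) / Q0 y) :
    Tendsto
      (fun ε : ℝ =>
        (Lobj P0 P1 W Q0 Q1 l1 l2 l3 l4 f ε - Lobj P0 P1 W Q0 Q1 l1 l2 l3 l4 f 0) / ε)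
      (nhdsWithin 0 (Set.Ioi 0))
      (nhds (l2 * ∑ i, θ i * (∑ x, P0 x * (f x * v x i))
        + l4 * γ1 * (∑ y, Q0 y * (g y * (if y then (1 : ℝ) else 0))))) := by
  have hW (x : 𝒳) : ∑ y, W x y = 1 := by rw [Fintype.sum_bool, add_comm, hWsum]
  have hX := sum_mul_log_div_eq_of_posterior_eq_logistic (hPSpos false) (hPSpos true) hP0pos
    hP1pos (fun x => (hPSgX1 x).symm.trans (hlogX x)) hfmean
  have hY := sum_mul_log_div_eq_of_posterior_eq_logistic (hPSpos false) (hPSpos true) hQ0pos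
    hQ1pos (fun y => (hPSgY1 y).symm.trans (hlogY y)) (sum_channel_eq_zero hW hfmean)
  have hQg (y : Bool) : Q0 y * g y = ∑ x, P0 x * f x * W x y := by
    rw [hg, mul_div_cancel₀ _ (hQ0pos y).ne']
    exact Finset.sum_congr rfl fun x _ => by ring
  have hD : HasDerivAt (Lobj P0 P1 W Q0 Q1 l1 l2 l3 l4 f)
      (l2 * ∑ i, θ i * (∑ x, P0 x * (f x * v x i))
        + l4 * γ1 * (∑ y, Q0 y * (g y * (if y then (1 : ℝ) else 0)))) 0 := by
    convert hasDerivAt_Lobj l1 l2 l3 l4 hP0pos hP1pos hW hQ0 hQ0pos hQ1pos hfmean using 1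
    rw [hX, hY, mul_assoc, Finset.mul_sum _ _ γ1]
    congr 2
    · simp only [Finset.mul_sum]
      rw [Finset.sum_comm]
      exact Finset.sum_congr rfl fun i _ => Finset.sum_congr rfl fun x _ => by ring
    · exact Finset.sum_congr rfl fun y _ => by rw [← hQg]; ring
  simpa only [zero_add, smul_eq_mul, div_eq_inv_mul] using hD.tendsto_slope_zero_right

/-- Example 1 of the paper: if
`P_{S|X}(1|x) = (1 + exp(θ₀ + ⟨θ,x⟩))⁻¹` for all `x ∈ 𝒳` and
`P_{S|Y}(1|y) = (1 + exp(γ₀ + γ₁y))⁻¹` for `y ∈ {0,1}`, then for every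
`f ∈ 𝓛(P_{X|S=0})`,
`Δ_λ(f) = λ₂·∑ᵢ θᵢ·E[f(X)·Xᵢ|S=0] + λ₄·γ₁·E[g(Y)·Y|S=0]`, where
`g(y) = E[f(X)|Y=y,S=0]` and `Δ_λ(f) = lim_{ε→0⁺}(L_λ(P̃_{X|S=0}) − L_λ(P_{X|S=0}))/ε`.
Here `𝒳` is a finite subset of `ℝᵈ` realized by an injective feature map
`v : 𝒳 → (Fin d → ℝ)` with `⟨θ,x⟩ = ∑ i, θ i * v x i`, `S = 𝒴 = Bool`
(`false ↔ 0`, `true ↔ 1`, so `Y` as a real number is `if y then 1 else 0`),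
`PS` is the marginal of `S` (positive), `P0 = P_{X|S=0}`, `P1 = P_{X|S=1}` (full support),
`W x y = W_{Y|X}(y|x)` the channel of the Markov chain `S → X → Y`,
`Q0 = P_{Y|S=0} = W ∘ P0`, `Q1 = P_{Y|S=1} = W ∘ P1` (full support), and the posteriors
are given by Bayes' rule: `P_{S|X}(1|x) = PS(1)·P1(x)/(PS(0)·P0(x) + PS(1)·P1(x))`,
`P_{S|Y}(1|y) = PS(1)·Q1(y)/(PS(0)·Q0(y) + PS(1)·Q1(y))`. -/
theorem stmt8
    {d : ℕ} {𝒳 : Type*} [Fintype 𝒳]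
    (v : 𝒳 → Fin d → ℝ) (hv : Function.Injective v)
    (PS : Bool → ℝ) (hPSpos : ∀ s, 0 < PS s) (hPSsum : PS false + PS true = 1)
    (P0 P1 : 𝒳 → ℝ)
    (hP0pos : ∀ x, 0 < P0 x) (hP0sum : ∑ x, P0 x = 1)
    (hP1pos : ∀ x, 0 < P1 x) (hP1sum : ∑ x, P1 x = 1)
    (W : 𝒳 → Bool → ℝ)
    (hWnn : ∀ x y, 0 ≤ W x y) (hWsum : ∀ x, W x false + W x true = 1)
    (Q0 Q1 : Bool → ℝ)
    (hQ0 : ∀ y, Q0 y = ∑ x, P0 x * W x y) (hQ1 : ∀ y, Q1 y = ∑ x, P1 x * W x y)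
    (hQ0pos : ∀ y, 0 < Q0 y) (hQ1pos : ∀ y, 0 < Q1 y)
    (l1 l2 l3 l4 : ℝ)
    (hl1 : 0 ≤ l1) (hl2 : 0 ≤ l2) (hl3 : 0 ≤ l3) (hl4 : 0 ≤ l4)
    (PSgX1 : 𝒳 → ℝ)
    (hPSgX1 : ∀ x, PSgX1 x = PS true * P1 x / (PS false * P0 x + PS true * P1 x))
    (PSgY1 : Bool → ℝ)
    (hPSgY1 : ∀ y, PSgY1 y = PS true * Q1 y / (PS false * Q0 y + PS true * Q1 y))
    (θ0 : ℝ) (θ : Fin d → ℝ)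
    (hlogX : ∀ x, PSgX1 x = (1 + Real.exp (θ0 + ∑ i, θ i * v x i))⁻¹)
    (γ0 γ1 : ℝ)
    (hlogY : ∀ y : Bool, PSgY1 y
      = (1 + Real.exp (γ0 + γ1 * (if y then (1 : ℝ) else 0)))⁻¹)
    (f : 𝒳 → ℝ)
    (hfmean : ∑ x, P0 x * f x = 0) (hfvar : ∑ x, P0 x * f x ^ 2 = 1)
    (g : Bool → ℝ)
    (hg : ∀ y, g y = (∑ x, P0 x * W x y * f x) / Q0 y) :
    Tendsto
      (fun ε : ℝ =>
        (Lobj P0 P1 W Q0 Q1 l1 l2 l3 l4 f ε - Lobj P0 P1 W Q0 Q1 l1 l2 l3 l4 f 0) / ε)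
      (nhdsWithin 0 (Set.Ioi 0))
      (nhds (l2 * ∑ i, θ i * (∑ x, P0 x * (f x * v x i))
        + l4 * γ1 * (∑ y, Q0 y * (g y * (if y then (1 : ℝ) else 0))))) :=
  stmt8_general v PS hPSpos P0 P1 hP0pos hP1pos W hWsum Q0 Q1 hQ0 hQ0pos hQ1pos l1 l2 l3 l4 PSgX1
    hPSgX1 PSgY1 hPSgY1 θ0 θ hlogX γ0 γ1 hlogY f hfmean g hg
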